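/- arXiv:1702.03606 — 4 statements merged into one kernel-verified Lean document; each statement's English description precedes it below -/
import Mathlib

section
/- For two finite simple graphs G and H, the Euler characteristic of the Zykov join satisfies χ(G+H) = χ(G) + χ(H) − χ(G)·χ(H). -/
/-- The Zykov join of two finite simple graphs: take the disjoint union of the
vertex sets, keep all edges of both graphs, and connect every vertex of the
first graph with every vertex of the second graph. -/
def zykovJoin {V W : Type} (G : SimpleGraph V) (H : SimpleGraph W) :
    SimpleGraph (V ⊕ W) where
  Adj x y :=
    match x, y with
    | Sum.inl a, Sum.inl b => G.Adj a b
    | Sum.inr a, Sum.inr b => H.Adj a b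
    | _, _ => True
  symm := by
    constructor
    intro x y h
    cases x <;> cases y
    · exact G.adj_symm h
    · trivial
    · trivial
    · exact H.adj_symm h
  loopless := by
    constructor
    intro x
    cases x
    · exact G.irrefl
    · exact H.irrefl

open scoped Classical in
/-- The Euler characteristic of a finite simple graph:
`χ(G) = Σ_k (-1)^k v_k`, where `v_k` is the number of `(k+1)`-cliques
(`k`-dimensional simplices) of `G`. -/
noncomputable def eulerChar {V : Type} [Fintype V] (G : SimpleGraph V) : ℤ :=
  ∑ k ∈ Finset.range (Fintype.card V),
    (-1 : ℤ) ^ k * ((G.cliqueFinset (k + 1)).card : ℤ)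

/-!
The clique generating function `f_G(t) = Σ t^|s|`, summed over all cliques `s` of `G` (the empty
one included), satisfies `f_G(-1) = 1 - χ(G)`. A clique of `G + H` is exactly the disjoint union of
a clique of `G` and a clique of `H`, so `f_{G+H} = f_G · f_H`; at `t = -1` this is
`1 - χ(G+H) = (1 - χ(G)) (1 - χ(H))`.
-/

open Finset

namespace SimpleGraph

variable {V W : Type}

theorem isClique_zykovJoin_disjSum (G : SimpleGraph V) (H : SimpleGraph W)
    (s : Finset V) (t : Finset W) :
    (zykovJoin G H).IsClique (s.disjSum t : Set (V ⊕ W)) ↔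
      G.IsClique (s : Set V) ∧ H.IsClique (t : Set W) := by
  refine ⟨fun h => ⟨?_, ?_⟩, ?_⟩
  · intro a ha b hb hab
    exact @h (.inl a) (by simpa using ha) (.inl b) (by simpa using hb) (by simpa using hab)
  · intro a ha b hb hab
    exact @h (.inr a) (by simpa using ha) (.inr b) (by simpa using hb) (by simpa using hab)
  · rintro ⟨hG, hH⟩ (a | a) ha (b | b) hb hab
    · exact hG (by simpa using ha) (by simpa using hb) (by simpa using hab)
    · trivial
    · trivial
    · exact hH (by simpa using ha) (by simpa using hb) (by simpa using hab)

open scoped Classical in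
noncomputable def cliqueGenFun {R : Type*} [CommSemiring R] [Fintype V] (G : SimpleGraph V)
    (t : R) : R :=
  ∑ s ∈ univ.filter (fun s : Finset V => G.IsClique (s : Set V)), t ^ #s

variable {R : Type*} [CommSemiring R] [Fintype V] [Fintype W]

theorem cliqueGenFun_zykovJoin (G : SimpleGraph V) (H : SimpleGraph W) (t : R) :
    cliqueGenFun (zykovJoin G H) t = cliqueGenFun G t * cliqueGenFun H t := by
  classical
  simp only [cliqueGenFun, sum_filter, Fintype.sum_mul_sum, ← Fintype.sum_prod_type']
  symm
  refine Fintype.sum_equiv (sumEquiv (α := V) (β := W)).symm.toEquiv _ _ fun p => ?_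
  simp only [OrderIso.coe_toEquiv, sumEquiv_symm_apply, isClique_zykovJoin_disjSum, card_disjSum,
    pow_add, ite_zero_mul_ite_zero]

open scoped Classical in
theorem cliqueGenFun_eq_sum_range (G : SimpleGraph V) (t : R) :
    cliqueGenFun G t = ∑ k ∈ range (Fintype.card V + 1), #(G.cliqueFinset k) * t ^ k := by
  have hcard : ∀ s ∈ univ.filter (fun s : Finset V => G.IsClique (s : Set V)),
      #s ∈ range (Fintype.card V + 1) :=
    fun s _ => mem_range_succ_iff.2 (card_le_univ s)
  rw [cliqueGenFun, ← sum_fiberwise_of_maps_to hcard]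
  refine sum_congr rfl fun k _ => ?_
  have hfiber : {s ∈ univ.filter (fun s : Finset V => G.IsClique (s : Set V)) | #s = k} =
      G.cliqueFinset k := by
    ext s
    simp only [mem_filter, mem_univ, true_and, mem_cliqueFinset_iff, isNClique_iff]
  rw [hfiber, sum_congr rfl fun s hs => by rw [(mem_cliqueFinset_iff.1 hs).card_eq], sum_const,
    nsmul_eq_mul]

theorem cliqueGenFun_neg_one (G : SimpleGraph V) :
    cliqueGenFun G (-1 : ℤ) = 1 - eulerChar G := by
  classical
  have hempty : #(G.cliqueFinset 0) = 1 := card_eq_one.2 ⟨∅, by ext; simp⟩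
  rw [cliqueGenFun_eq_sum_range, sum_range_succ', hempty, eulerChar]
  simp only [pow_succ, mul_comm, neg_mul, one_mul, sum_neg_distrib, Nat.cast_one, pow_zero,
    mul_one]
  ring

end SimpleGraph

/-- Euler characteristic of the Zykov join:
`χ(G+H) = χ(G) + χ(H) - χ(G)·χ(H)`. -/
theorem eulerChar_zykovJoin {V W : Type} [Fintype V] [Fintype W]
    (G : SimpleGraph V) (H : SimpleGraph W) :
    eulerChar (zykovJoin G H) =
      eulerChar G + eulerChar H - eulerChar G * eulerChar H := by
  have h := SimpleGraph.cliqueGenFun_zykovJoin G H (-1 : ℤ)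
  simp only [SimpleGraph.cliqueGenFun_neg_one] at h
  linear_combination -h
end

section
/- The extended Euler polynomial is multiplicative over the Zykov join: f_{G+H}(x) = f_G(x) · f_H(x). -/
open scoped Classical in
/-- The extended Euler polynomial (f-vector generating function) of a finite
simple graph: `f_G(x) = 1 + Σ_{k ≥ 0} v_k x^{k+1}`, where `v_k` is the number
of `(k+1)`-cliques of `G`. -/
noncomputable def eulerPoly {V : Type} [Fintype V] (G : SimpleGraph V) :
    Polynomial ℤ :=
  1 + ∑ k ∈ Finset.range (Fintype.card V),
    Polynomial.C ((G.cliqueFinset (k + 1)).card : ℤ) * Polynomial.X ^ (k + 1)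

/-
Let `P_G = Σ X ^ |s|`, summed over all cliques `s` of `G` including the empty one; grouping the
cliques by size gives `P_G = f_G`. Since every pair of vertices from different sides is an edge of
`G + H`, a subset of `V ⊕ W` is a clique of `G + H` exactly when its two halves are cliques of `G`
and of `H`. Cliques of `G + H` are thus pairs of cliques with additive sizes, so
`P_{G+H} = P_G · P_H`.
-/

open Finset Polynomial

theorem Finset.coe_toLeft {α β : Type*} (u : Finset (α ⊕ β)) :
    (u.toLeft : Set α) = Sum.inl ⁻¹' (u : Set (α ⊕ β)) := by
  ext
  simp

theorem Finset.coe_toRight {α β : Type*} (u : Finset (α ⊕ β)) :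
    (u.toRight : Set β) = Sum.inr ⁻¹' (u : Set (α ⊕ β)) := by
  ext
  simp

namespace SimpleGraph

theorem isClique_zykovJoin_iff {V W : Type} {G : SimpleGraph V} {H : SimpleGraph W}
    {s : Set (V ⊕ W)} :
    (zykovJoin G H).IsClique s ↔ G.IsClique (Sum.inl ⁻¹' s) ∧ H.IsClique (Sum.inr ⁻¹' s) := by
  conv_lhs => rw [← Set.image_preimage_inl_union_image_preimage_inr s]
  rw [IsClique, Set.pairwise_union, Sum.inl_injective.injOn.pairwise_image,
    Sum.inr_injective.injOn.pairwise_image]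
  simp only [Set.mem_image, forall_exists_index, and_imp, forall_apply_eq_imp_iff₂]
  exact ⟨fun h => ⟨h.1, h.2.1⟩, fun h => ⟨h.1, h.2, fun _ _ _ _ _ => ⟨trivial, trivial⟩⟩⟩

theorem cliqueFinset_zero {V : Type} [Fintype V] [DecidableEq V] (G : SimpleGraph V)
    [DecidableRel G.Adj] : G.cliqueFinset 0 = {∅} := by
  ext s
  simp [isNClique_zero]

theorem sum_cliqueFinset_X_pow_card {R V : Type} [CommSemiring R] [Fintype V] [DecidableEq V]
    (G : SimpleGraph V) [DecidableRel G.Adj] (n : ℕ) :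
    ∑ s ∈ G.cliqueFinset n, (X : R[X]) ^ #s = C (#(G.cliqueFinset n) : R) * X ^ n := by
  rw [sum_congr rfl fun s hs => by rw [(mem_cliqueFinset_iff.1 hs).card_eq], sum_const,
    nsmul_eq_mul, C_eq_natCast]

open scoped Classical in
noncomputable def cliquePolynomial {V : Type} [Fintype V] (G : SimpleGraph V) : ℤ[X] :=
  ∑ s ∈ {s : Finset V | G.IsClique (s : Set V)}, X ^ #s

theorem eulerPoly_eq_cliquePolynomial {V : Type} [Fintype V] (G : SimpleGraph V) :
    eulerPoly G = cliquePolynomial G := by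
  classical
  have card_mem_range : ∀ s ∈ ({s : Finset V | G.IsClique (s : Set V)} : Finset _),
      #s ∈ range (Fintype.card V + 1) :=
    fun s _ => mem_range.2 (Nat.lt_succ_of_le (card_le_univ s))
  have cliques_of_card (n : ℕ) :
      {s ∈ ({s : Finset V | G.IsClique (s : Set V)} : Finset _) | #s = n} = G.cliqueFinset n := by
    ext s
    simp [isNClique_iff]
  rw [cliquePolynomial, ← sum_fiberwise_of_maps_to card_mem_range, sum_range_succ']
  simp only [cliques_of_card, cliqueFinset_zero, sum_singleton, card_empty, pow_zero,
    sum_cliqueFinset_X_pow_card, eulerPoly]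
  exact add_comm _ _

theorem cliquePolynomial_zykovJoin {V W : Type} [Fintype V] [Fintype W]
    (G : SimpleGraph V) (H : SimpleGraph W) :
    cliquePolynomial (zykovJoin G H) = cliquePolynomial G * cliquePolynomial H := by
  classical
  rw [cliquePolynomial, cliquePolynomial, cliquePolynomial, sum_mul_sum, ← sum_product']
  refine sum_equiv sumEquiv.toEquiv (fun u => ?_) (fun u _ => ?_)
  · simp only [mem_filter, mem_univ, true_and, mem_product, RelIso.coe_fn_toEquiv,
      sumEquiv_apply_fst, sumEquiv_apply_snd, coe_toLeft, coe_toRight, isClique_zykovJoin_iff]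
  · rw [← pow_add]
    exact congrArg _ card_toLeft_add_card_toRight.symm

end SimpleGraph

/-- The extended Euler polynomial is multiplicative over the Zykov join:
`f_{G+H}(x) = f_G(x) · f_H(x)`. -/
theorem eulerPoly_zykovJoin {V W : Type} [Fintype V] [Fintype W]
    (G : SimpleGraph V) (H : SimpleGraph W) :
    eulerPoly (zykovJoin G H) = eulerPoly G * eulerPoly H := by
  simp only [SimpleGraph.eulerPoly_eq_cliquePolynomial, SimpleGraph.cliquePolynomial_zykovJoin]
end

section
/- In the Barycentric refinement G_1 of a finite abstract simplicial complex G, the unit sphere S(x) of any vertex x is the Zykov join of the stable sphere S^-(x) and the unstable sphere S^+(x): S(x) = S^-(x) + S^+(x). -/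
/-- A finite abstract simplicial complex on a vertex type `α`: a finite set of
nonempty finite sets (simplices) closed under taking nonempty subsets. -/
def IsSimplicialComplex {α : Type} [DecidableEq α] (K : Finset (Finset α)) : Prop :=
  (∀ s ∈ K, s.Nonempty) ∧ ∀ s ∈ K, ∀ t ⊆ s, t.Nonempty → t ∈ K

/-- The Barycentric refinement of a finite abstract simplicial complex `K`:
the graph whose vertices are the simplices of `K`, two simplices being
adjacent iff one is a proper subset of the other. -/
def barycentric {α : Type} [DecidableEq α] (K : Finset (Finset α)) :
    SimpleGraph {s : Finset α // s ∈ K} where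
  Adj x y := x.1 ⊂ y.1 ∨ y.1 ⊂ x.1
  symm := by constructor; intro x y h; tauto
  loopless := by constructor; intro x h; rcases h with h | h <;> exact (lt_irrefl _ h)

namespace SimpleGraph

variable {V : Type} (G : SimpleGraph V)

noncomputable def induceUnionIsoZykovJoin {A B : Set V} (hAB : Disjoint A B)
    (hcross : ∀ a ∈ A, ∀ b ∈ B, G.Adj a b) :
    G.induce (A ∪ B) ≃g zykovJoin (G.induce A) (G.induce B) :=
  open Classical in
  Iso.symm
    { toEquiv := (Equiv.Set.union hAB).symm
      map_rel_iff' := by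
        rintro (a | b) (a' | b')
        · exact Iff.rfl
        · exact iff_of_true (hcross _ a.2 _ b'.2) trivial
        · exact iff_of_true (hcross _ a'.2 _ b.2).symm trivial
        · exact Iff.rfl }

end SimpleGraph

theorem disjoint_setOf_ssubset_setOf_ssuperset {α : Type} {K : Finset (Finset α)}
    (x : {s : Finset α // s ∈ K}) :
    Disjoint {y : {s : Finset α // s ∈ K} | y.1 ⊂ x.1} {y | x.1 ⊂ y.1} :=
  Set.disjoint_left.mpr fun y (hlt : y.1 ⊂ x.1) (hgt : x.1 ⊂ y.1) => ssubset_asymm hlt hgt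

section Barycentric

variable {α : Type} [DecidableEq α] (K : Finset (Finset α)) (x : {s : Finset α // s ∈ K})

theorem barycentric_neighborSet :
    (barycentric K).neighborSet x = {y | y.1 ⊂ x.1} ∪ {y | x.1 ⊂ y.1} := by
  ext y
  exact Or.comm

theorem barycentric_adj_of_ssubset_of_ssuperset {y z : {s : Finset α // s ∈ K}}
    (hy : y.1 ⊂ x.1) (hz : x.1 ⊂ z.1) : (barycentric K).Adj y z :=
  Or.inl (hy.trans hz)

end Barycentric

theorem sphere_eq_join_stable_unstable_general {α : Type} [DecidableEq α]
    (K : Finset (Finset α))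
    (x : {s : Finset α // s ∈ K}) :
    Nonempty
      ((barycentric K).induce ((barycentric K).neighborSet x) ≃g
        zykovJoin
          ((barycentric K).induce {y : {s : Finset α // s ∈ K} | y.1 ⊂ x.1})
          ((barycentric K).induce {y : {s : Finset α // s ∈ K} | x.1 ⊂ y.1})) := by
  rw [barycentric_neighborSet]
  exact ⟨(barycentric K).induceUnionIsoZykovJoin (disjoint_setOf_ssubset_setOf_ssuperset x)
    fun _ hy _ hz => barycentric_adj_of_ssubset_of_ssuperset K x hy hz⟩

/-- In the Barycentric refinement `G₁` of a finite abstract simplicial complex,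
the unit sphere `S(x)` of any vertex `x` is the Zykov join of the stable sphere
`S⁻(x)` (neighbors that are proper subsets of `x`) and the unstable sphere
`S⁺(x)` (neighbors that properly contain `x`): `S(x) = S⁻(x) + S⁺(x)`. -/
theorem sphere_eq_join_stable_unstable {α : Type} [DecidableEq α]
    (K : Finset (Finset α)) (hK : IsSimplicialComplex K)
    (x : {s : Finset α // s ∈ K}) :
    Nonempty
      ((barycentric K).induce ((barycentric K).neighborSet x) ≃g
        zykovJoin
          ((barycentric K).induce {y : {s : Finset α // s ∈ K} | y.1 ⊂ x.1})
          ((barycentric K).induce {y : {s : Finset α // s ∈ K} | x.1 ⊂ y.1})) :=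
  sphere_eq_join_stable_unstable_general K x
end

section
/- The Zykov join of an Evako n-sphere and an Evako m-sphere is an Evako (n+m+1)-sphere. -/
/-- A finite simple graph is contractible (in the inductive sense of Ivashchenko)
if it is the one-point graph, or if it has a vertex `v` whose unit sphere
(induced subgraph on the neighbors of `v`) and whose removal are both
contractible. -/
inductive GraphContractible : ∀ {V : Type}, SimpleGraph V → Prop
  | point {V : Type} (G : SimpleGraph V) (h : ∃ v : V, ∀ w : V, w = v) :
      GraphContractible G
  | step {V : Type} (G : SimpleGraph V) (v : V)
      (h1 : GraphContractible (G.induce (G.neighborSet v)))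
      (h2 : GraphContractible (G.induce {w : V | w ≠ v})) :
      GraphContractible G

/-- Evako `d`-spheres, defined inductively: the empty graph is the unique
`(-1)`-sphere; a graph is a `d`-sphere if every unit sphere in it is a
`(d-1)`-sphere and removing some vertex leaves a contractible graph. -/
inductive EvakoSphere : ∀ {V : Type}, SimpleGraph V → ℤ → Prop
  | empty {V : Type} (G : SimpleGraph V) (h : IsEmpty V) : EvakoSphere G (-1)
  | step {V : Type} (G : SimpleGraph V) (d : ℤ)
      (hS : ∀ v : V, EvakoSphere (G.induce (G.neighborSet v)) (d - 1))
      (hv : ∃ v : V, GraphContractible (G.induce {w : V | w ≠ v})) :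
      EvakoSphere G d

/-!
Induct on both spheres; the empty graph is a unit for the join, which settles the `(-1)`-cases.
The unit sphere of a vertex `v` of `G` in `G + H` is `S(v) + H`, and that of a vertex `w` of `H`
is `G + S(w)`, both spheres of dimension `n + m` by induction. Removing a vertex `v` of `G` with
`G - v` contractible leaves `(G - v) + H`, which is contractible since the join of a contractible
graph with a finite graph is: remove the vertices of the second factor one at a time.
-/

variable {V V' W : Type}

def SimpleGraph.Iso.induceOfMemIff {G : SimpleGraph V} {G' : SimpleGraph V'} (e : G ≃g G')
    {s : Set V} {t : Set V'} (h : ∀ a, a ∈ s ↔ e a ∈ t) : G.induce s ≃g G'.induce t where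
  toEquiv := e.toEquiv.subtypeEquiv h
  map_rel_iff' := e.map_adj_iff

theorem GraphContractible.of_iso {G : SimpleGraph V} (h : GraphContractible G)
    {G' : SimpleGraph V'} (e : G ≃g G') : GraphContractible G' := by
  induction h generalizing V' with
  | point G hp =>
    obtain ⟨v, hv⟩ := hp
    exact .point G' ⟨e v, fun w => e.symm.injective (by rw [hv (e.symm w), e.symm_apply_apply])⟩
  | step G v _ _ ih₁ ih₂ =>
    exact .step G' (e v) (ih₁ (e.induceOfMemIff fun _ => e.map_adj_iff.symm))
      (ih₂ (e.induceOfMemIff fun _ => e.injective.ne_iff.symm))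

theorem EvakoSphere.of_iso {G : SimpleGraph V} {d : ℤ} (h : EvakoSphere G d)
    {G' : SimpleGraph V'} (e : G ≃g G') : EvakoSphere G' d := by
  induction h generalizing V' with
  | empty G hV => exact .empty G' e.toEquiv.symm.isEmpty
  | step G d _ hdel ih =>
    obtain ⟨v, hv⟩ := hdel
    refine .step G' d (fun v' => ih (e.symm v') (e.induceOfMemIff fun a => ?_))
      ⟨e v, hv.of_iso (e.induceOfMemIff fun _ => e.injective.ne_iff.symm)⟩
    simpa using e.symm.map_adj_iff (v := v') (w := e a)

theorem Finite.of_finite_subtype_ne {α : Type*} (a : α) (h : Finite {b // b ≠ a}) :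
    Finite α := by
  classical
  exact .of_equiv _ (Equiv.optionSubtypeNe a)

theorem GraphContractible.finite {G : SimpleGraph V} (h : GraphContractible G) : Finite V := by
  induction h with
  | point G hp =>
    obtain ⟨v, hv⟩ := hp
    have : Subsingleton _ := ⟨fun a b => (hv a).trans (hv b).symm⟩
    infer_instance
  | step G v _ _ _ ih => exact .of_finite_subtype_ne v ih

namespace zykovJoin

variable (G : SimpleGraph V) (H : SimpleGraph W)

def sumEmptyIso [IsEmpty W] : zykovJoin G H ≃g G where
  toEquiv := Equiv.sumEmpty V W
  map_rel_iff' := by rintro (a | b) (a' | b') <;> first | exact isEmptyElim ‹W› | rfl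

def emptySumIso [IsEmpty V] : zykovJoin G H ≃g H where
  toEquiv := Equiv.emptySum V W
  map_rel_iff' := by rintro (a | b) (a' | b') <;> first | exact isEmptyElim ‹V› | rfl

def induceIsoLeft (u : Set (V ⊕ W)) (s : Set V) (hs : ∀ a, .inl a ∈ u ↔ a ∈ s)
    (hu : ∀ b, .inr b ∈ u) : (zykovJoin G H).induce u ≃g zykovJoin (G.induce s) H where
  toFun
    | ⟨.inl a, ha⟩ => .inl ⟨a, (hs a).1 ha⟩
    | ⟨.inr b, _⟩ => .inr b
  invFun
    | .inl ⟨a, ha⟩ => ⟨.inl a, (hs a).2 ha⟩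
    | .inr b => ⟨.inr b, hu b⟩
  left_inv := by rintro ⟨a | b, h⟩ <;> rfl
  right_inv := by rintro (⟨a, h⟩ | b) <;> rfl
  map_rel_iff' := by rintro ⟨a | b, ha⟩ ⟨a' | b', hb⟩ <;> rfl

def induceIsoRight (u : Set (V ⊕ W)) (t : Set W) (ht : ∀ b, .inr b ∈ u ↔ b ∈ t)
    (hu : ∀ a, .inl a ∈ u) : (zykovJoin G H).induce u ≃g zykovJoin G (H.induce t) where
  toFun
    | ⟨.inl a, _⟩ => .inl a
    | ⟨.inr b, hb⟩ => .inr ⟨b, (ht b).1 hb⟩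
  invFun
    | .inl a => ⟨.inl a, hu a⟩
    | .inr ⟨b, hb⟩ => ⟨.inr b, (ht b).2 hb⟩
  left_inv := by rintro ⟨a | b, h⟩ <;> rfl
  right_inv := by rintro (a | ⟨b, h⟩) <;> rfl
  map_rel_iff' := by rintro ⟨a | b, ha⟩ ⟨a' | b', hb⟩ <;> rfl

def neighborSetInlIso (v : V) :
    (zykovJoin G H).induce ((zykovJoin G H).neighborSet (.inl v)) ≃g
      zykovJoin (G.induce (G.neighborSet v)) H :=
  induceIsoLeft G H _ _ (fun _ => .rfl) fun _ => trivial

def neighborSetInrIso (w : W) :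
    (zykovJoin G H).induce ((zykovJoin G H).neighborSet (.inr w)) ≃g
      zykovJoin G (H.induce (H.neighborSet w)) :=
  induceIsoRight G H _ _ (fun _ => .rfl) fun _ => trivial

def induceNeInlIso (v : V) :
    (zykovJoin G H).induce {x | x ≠ .inl v} ≃g zykovJoin (G.induce {a | a ≠ v}) H :=
  induceIsoLeft G H _ _ (fun _ => Sum.inl_injective.ne_iff) fun _ => Sum.inr_ne_inl

def induceNeInrIso (w : W) :
    (zykovJoin G H).induce {x | x ≠ .inr w} ≃g zykovJoin G (H.induce {b | b ≠ w}) :=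
  induceIsoRight G H _ _ (fun _ => Sum.inr_injective.ne_iff) fun _ => Sum.inl_ne_inr

end zykovJoin

theorem GraphContractible.zykovJoin_of_finite {G : SimpleGraph V} (hG : GraphContractible G)
    [Finite W] (H : SimpleGraph W) : GraphContractible (zykovJoin G H) := by
  induction hcard : Nat.card W using Nat.strong_induction_on generalizing W with
  | _ k ih =>
    rcases isEmpty_or_nonempty W with hW | ⟨⟨w⟩⟩
    · exact hG.of_iso (zykovJoin.sumEmptyIso G H).symm
    have hS := ih _ (hcard ▸ Finite.card_subtype_lt H.irrefl) (H.induce (H.neighborSet w)) rfl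
    have hD := ih _ (hcard ▸ Finite.card_subtype_lt (not_not.2 rfl)) (H.induce {b | b ≠ w}) rfl
    exact .step _ (.inr w) (hS.of_iso (zykovJoin.neighborSetInrIso G H w).symm)
      (hD.of_iso (zykovJoin.induceNeInrIso G H w).symm)

/-- The Zykov join of an Evako `n`-sphere and an Evako `m`-sphere is an Evako
`(n+m+1)`-sphere. -/
theorem evakoSphere_zykovJoin {V W : Type} (G : SimpleGraph V) (H : SimpleGraph W)
    (n m : ℤ) (hG : EvakoSphere G n) (hH : EvakoSphere H m) :
    EvakoSphere (zykovJoin G H) (n + m + 1) := by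
  induction hG generalizing W H m with
  | empty G hV =>
    simpa using hH.of_iso (zykovJoin.emptySumIso G H).symm
  | step G n hSG hvG ihG =>
    induction hH with
    | empty H hW =>
      simpa using (EvakoSphere.step G n hSG hvG).of_iso (zykovJoin.sumEmptyIso G H).symm
    | step H m hSH hvH ihH =>
      obtain ⟨v, hv⟩ := hvG
      have hH : EvakoSphere H m := .step H m hSH hvH
      obtain ⟨w, hw⟩ := hvH
      have := Finite.of_finite_subtype_ne w hw.finite
      refine .step _ _ ?_
        ⟨.inl v, (hv.zykovJoin_of_finite H).of_iso (zykovJoin.induceNeInlIso G H v).symm⟩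
      rintro (v' | w')
      · rw [show n + m + 1 - 1 = n - 1 + m + 1 by ring]
        exact (ihG v' H m hH).of_iso (zykovJoin.neighborSetInlIso G H v').symm
      · rw [show n + m + 1 - 1 = n + (m - 1) + 1 by ring]
        exact (ihH w').of_iso (zykovJoin.neighborSetInrIso G H w').symm
end
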